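/- In the special case N = M, there exists an instance for which no clustering of size k is ρ-proportional for any ρ < 3/2. The instance has k = 5 and three identical far-apart clusters, each consisting of one point of each type x1, x2, x3 and 100 co-located points of each type a1, a2, a3, with within-cluster distances d(a1,x1)=4, d(a1,x2)=1, d(a1,x3)=2 (cyclically), distance 3 between distinct x-type points and between distinct a-type points, and cross-cluster distances sufficiently large. -/
import Mathlib


open Finset

/-- Points: a cluster index in `Fin 3`, and within a cluster either one of three `x`-type
points (`Sum.inl j`) or one of 100 co-located copies of each of three `a`-types
(`Sum.inr (t, c)`).  Total: 3 · (3 + 300) = 909 points. -/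
abbrev Pt : Type := Fin 3 × (Fin 3 ⊕ Fin 3 × Fin 100)

/-- Cyclic table: d(a_i, x_i)=4, d(a_i, x_{i+1})=1, d(a_i, x_{i+2})=2 (mod 3). -/
def tbl (i j : ℕ) : ℝ :=
  if (j + 3 - i) % 3 = 0 then 4 else if (j + 3 - i) % 3 = 1 then 1 else 2

/-- Within-cluster distances: 0 between co-located points, 3 between distinct x-types and
between distinct a-types, and the cyclic table between a-types and x-types. -/
def within : (Fin 3 ⊕ Fin 3 × Fin 100) → (Fin 3 ⊕ Fin 3 × Fin 100) → ℝ
  | Sum.inl i, Sum.inl j => if i = j then 0 else 3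
  | Sum.inr p, Sum.inr q => if p.1 = q.1 then 0 else 3
  | Sum.inr p, Sum.inl j => tbl p.1.val j.val
  | Sum.inl j, Sum.inr p => tbl p.1.val j.val

/-- Distance on the instance: within-cluster as above, cross-cluster distance 100 (large). -/
def dist2 (p q : Pt) : ℝ := if p.1 = q.1 then within p.2 q.2 else 100

/-- `D_i(X)`. -/
noncomputable def pcost (i : Pt) (X : Finset Pt) : ℝ :=
  sInf ((dist2 i) '' (X : Set Pt))

/-- the 100 copies of a-type `t` in cluster `c` -/
def A (c t : Fin 3) : Finset Pt :=
  (Finset.univ : Finset (Fin 100)).image (fun m => (c, Sum.inr (t, m)))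

lemma mem_A {i : Pt} {c t : Fin 3} : i ∈ A c t ↔ ∃ m, i = (c, Sum.inr (t, m)) := by
  simp [A, eq_comm]

lemma card_A (c t : Fin 3) : (A c t).card = 100 := by
  rw [A, Finset.card_image_of_injective _ (fun a b h => by simpa using h)]
  simp

lemma pcost_lt {X : Finset Pt} (hXne : X.Nonempty) (i : Pt) {v : ℝ}
    (h : ∀ x ∈ X, v < dist2 i x) : v < pcost i X := by
  have hfin : ((dist2 i) '' (X : Set Pt)).Finite := X.finite_toSet.image _
  obtain ⟨x0, hx0⟩ := hXne
  have hne : ((dist2 i) '' (X : Set Pt)).Nonempty := ⟨dist2 i x0, x0, hx0, rfl⟩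
  obtain ⟨x, hx, heq⟩ := hne.csInf_mem hfin
  rw [pcost, ← heq]
  exact h x hx

lemma exists_small_fiber (X : Finset Pt) (h : X.card = 5) :
    ∃ c : Fin 3, (X.filter (fun p => p.1 = c)).card ≤ 1 := by
  by_contra hcon
  push_neg at hcon
  have hsum : X.card = ∑ c : Fin 3, (X.filter fun p => p.1 = c).card :=
    Finset.card_eq_sum_card_fiberwise (fun x _ => Finset.mem_univ _)
  have h6 : 6 ≤ ∑ c : Fin 3, (X.filter fun p => p.1 = c).card := by
    calc (6 : ℕ) = ∑ _c : Fin 3, 2 := by simp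
    _ ≤ _ := Finset.sum_le_sum (fun c _ => hcon c)
  omega

lemma key (ρ : ℝ) (X : Finset Pt) (hXne : X.Nonempty)
    (c t1 t2 : Fin 3) (ht : t1 ≠ t2) (y : Pt)
    (hd : ∀ t m, (t = t1 ∨ t = t2) → ∀ x ∈ X,
        ρ * dist2 (c, Sum.inr (t, m)) y < dist2 (c, Sum.inr (t, m)) x)
    (hprop : ∀ S : Finset Pt, 182 ≤ S.card → ∀ y : Pt,
        ∃ i ∈ S, pcost i X ≤ ρ * dist2 i y) : False := by
  have hdisj : Disjoint (A c t1) (A c t2) := by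
    rw [Finset.disjoint_left]
    intro a h1 h2
    obtain ⟨m1, rfl⟩ := mem_A.mp h1
    obtain ⟨m2, he⟩ := mem_A.mp h2
    have h2' : (Sum.inr (t1, m1) : Fin 3 ⊕ Fin 3 × Fin 100) = Sum.inr (t2, m2) :=
      congrArg Prod.snd he
    have hte : t1 = t2 ∧ m1 = m2 := by simpa using h2'
    exact ht hte.1
  have hcard : 182 ≤ (A c t1 ∪ A c t2).card := by
    rw [Finset.card_union_of_disjoint hdisj, card_A, card_A]; norm_num
  obtain ⟨i, hiS, hle⟩ := hprop (A c t1 ∪ A c t2) hcard y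
  rw [Finset.mem_union] at hiS
  have : ∃ t m, (t = t1 ∨ t = t2) ∧ i = (c, Sum.inr (t, m)) := by
    rcases hiS with h | h
    · obtain ⟨m, rfl⟩ := mem_A.mp h; exact ⟨t1, m, Or.inl rfl, rfl⟩
    · obtain ⟨m, rfl⟩ := mem_A.mp h; exact ⟨t2, m, Or.inr rfl, rfl⟩
  obtain ⟨t, m, htt, rfl⟩ := this
  have := pcost_lt hXne _ (hd t m htt)
  linarith

/-- In this N = M instance (n = 909, k = 5, so ⌈n/k⌉ = 182), no clustering of 5 centers is
ρ-proportional for any ρ < 3/2. -/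
theorem no_better_than_three_halves_proportional :
    ∀ ρ : ℝ, 0 ≤ ρ → ρ < 3 / 2 →
      ∀ X : Finset Pt, X.card = 5 →
        ¬ (∀ S : Finset Pt, 182 ≤ S.card → ∀ y : Pt,
            ∃ i ∈ S, pcost i X ≤ ρ * dist2 i y) := by
  intro ρ hρ0 hρ X hcard hprop
  have hXne : X.Nonempty := Finset.card_pos.mp (by omega)
  obtain ⟨c, hc⟩ := exists_small_fiber X hcard
  by_cases hex : ∃ p ∈ X, p.1 = c
  · obtain ⟨p, hpX, hpc⟩ := hex
    have huniq : ∀ x ∈ X, x.1 = c → x = p := by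
      intro x hx hxc
      have h1 : x ∈ X.filter (fun q => q.1 = c) := by simp [hx, hxc]
      have h2 : p ∈ X.filter (fun q => q.1 = c) := by simp [hpX, hpc]
      exact Finset.card_le_one.mp hc x h1 p h2
    obtain ⟨c', z⟩ := p
    simp only at hpc
    subst hpc
    cases z with
    | inl j =>
      fin_cases j
      · refine key ρ X hXne c' 0 1 (by decide) (c', Sum.inl 2) ?_ hprop
        intro t m htt x hx
        by_cases hxc : x.1 = c'
        · rw [huniq x hx hxc]
          rcases htt with rfl | rfl <;> norm_num [dist2, within, tbl, Fin.ext_iff] <;> linarith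
        · have hne2 : ¬ ((c' : Fin 3) = x.1) := fun h => hxc h.symm
          have h100 : dist2 (c', Sum.inr (t, m)) x = 100 := by
            rw [dist2, if_neg hne2]
          rw [h100]
          rcases htt with rfl | rfl <;> norm_num [dist2, within, tbl, Fin.ext_iff] <;> linarith
      · refine key ρ X hXne c' 1 2 (by decide) (c', Sum.inl 0) ?_ hprop
        intro t m htt x hx
        by_cases hxc : x.1 = c'
        · rw [huniq x hx hxc]
          rcases htt with rfl | rfl <;> norm_num [dist2, within, tbl, Fin.ext_iff] <;> linarith
        · have hne2 : ¬ ((c' : Fin 3) = x.1) := fun h => hxc h.symm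
          have h100 : dist2 (c', Sum.inr (t, m)) x = 100 := by
            rw [dist2, if_neg hne2]
          rw [h100]
          rcases htt with rfl | rfl <;> norm_num [dist2, within, tbl, Fin.ext_iff] <;> linarith
      · refine key ρ X hXne c' 2 0 (by decide) (c', Sum.inl 1) ?_ hprop
        intro t m htt x hx
        by_cases hxc : x.1 = c'
        · rw [huniq x hx hxc]
          rcases htt with rfl | rfl <;> norm_num [dist2, within, tbl, Fin.ext_iff] <;> linarith
        · have hne2 : ¬ ((c' : Fin 3) = x.1) := fun h => hxc h.symm
          have h100 : dist2 (c', Sum.inr (t, m)) x = 100 := by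
            rw [dist2, if_neg hne2]
          rw [h100]
          rcases htt with rfl | rfl <;> norm_num [dist2, within, tbl, Fin.ext_iff] <;> linarith
    | inr p =>
      obtain ⟨t0, m0⟩ := p
      fin_cases t0
      · refine key ρ X hXne c' 1 2 (by decide) (c', Sum.inl 0) ?_ hprop
        intro t m htt x hx
        by_cases hxc : x.1 = c'
        · rw [huniq x hx hxc]
          rcases htt with rfl | rfl <;> norm_num [dist2, within, tbl, Fin.ext_iff] <;> linarith
        · have hne2 : ¬ ((c' : Fin 3) = x.1) := fun h => hxc h.symm
          have h100 : dist2 (c', Sum.inr (t, m)) x = 100 := by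
            rw [dist2, if_neg hne2]
          rw [h100]
          rcases htt with rfl | rfl <;> norm_num [dist2, within, tbl, Fin.ext_iff] <;> linarith
      · refine key ρ X hXne c' 2 0 (by decide) (c', Sum.inl 1) ?_ hprop
        intro t m htt x hx
        by_cases hxc : x.1 = c'
        · rw [huniq x hx hxc]
          rcases htt with rfl | rfl <;> norm_num [dist2, within, tbl, Fin.ext_iff] <;> linarith
        · have hne2 : ¬ ((c' : Fin 3) = x.1) := fun h => hxc h.symm
          have h100 : dist2 (c', Sum.inr (t, m)) x = 100 := by
            rw [dist2, if_neg hne2]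
          rw [h100]
          rcases htt with rfl | rfl <;> norm_num [dist2, within, tbl, Fin.ext_iff] <;> linarith
      · refine key ρ X hXne c' 0 1 (by decide) (c', Sum.inl 2) ?_ hprop
        intro t m htt x hx
        by_cases hxc : x.1 = c'
        · rw [huniq x hx hxc]
          rcases htt with rfl | rfl <;> norm_num [dist2, within, tbl, Fin.ext_iff] <;> linarith
        · have hne2 : ¬ ((c' : Fin 3) = x.1) := fun h => hxc h.symm
          have h100 : dist2 (c', Sum.inr (t, m)) x = 100 := by
            rw [dist2, if_neg hne2]
          rw [h100]
          rcases htt with rfl | rfl <;> norm_num [dist2, within, tbl, Fin.ext_iff] <;> linarith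
  · push_neg at hex
    refine key ρ X hXne c 0 1 (by decide) (c, Sum.inl 0) ?_ hprop
    intro t m htt x hx
    have hne : ¬ (c = x.1) := fun h => hex x hx h.symm
    have h100 : dist2 (c, Sum.inr (t, m)) x = 100 := by
      simp [dist2, hne]
    rw [h100]
    rcases htt with rfl | rfl <;> norm_num [dist2, within, tbl, Fin.ext_iff] <;> linarith
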